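/- The polynomial F_{S1} := x0^9 + (x1^3 − x2^3)·(x2^3 − x3^3)·(x3^3 − x1^3) is irreducible in the polynomial ring ℂ[x0, x1, x2, x3]. -/

import Mathlib

/-!
Singling out `x0`, `F_{S1}` becomes `T ^ 9 + g` over `ℂ[x1, x2, x3]`, with
`g = (x1³ - x2³)(x2³ - x3³)(x3³ - x1³)`. The linear form `x1 - x2` is prime (a shear of the
variables turns it into `x1`), and it divides `g` exactly once: `x1³ - x2³` contributes one factor
`x1 - x2` and a cofactor equal to `3 x1²` on `x1 = x2`, while the other two factors do not vanish
there. Eisenstein's criterion at `x1 - x2` concludes.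
-/

open MvPolynomial

/-- The homogeneous degree-9 polynomial defining the surface `S1 ⊂ ℙ³_ℂ`. -/
noncomputable def FS1 : MvPolynomial (Fin 4) ℂ :=
  X 0 ^ 9 + (X 1 ^ 3 - X 2 ^ 3) * (X 2 ^ 3 - X 3 ^ 3) * (X 3 ^ 3 - X 1 ^ 3)

namespace Polynomial

theorem irreducible_X_pow_add_C_of_prime_dvd {R : Type*} [CommRing R] [IsDomain R] {p c : R}
    (hp : Prime p) (hpc : p ∣ c) (hpc2 : ¬p ^ 2 ∣ c) {n : ℕ} (hn : n ≠ 0) :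
    Irreducible (X ^ n + C c : R[X]) := by
  have hmonic : (X ^ n + C c : R[X]).Monic := monic_X_pow_add_C c hn
  have hdeg : (X ^ n + C c : R[X]).degree = n := degree_X_pow_add_C (Nat.pos_of_ne_zero hn) c
  refine irreducible_of_eisenstein_criterion ((Ideal.span_singleton_prime hp.ne_zero).mpr hp)
    ?_ ?_ ?_ ?_ hmonic.isPrimitive
  · rw [hmonic.leadingCoeff, Ideal.mem_span_singleton]
    exact fun h => hp.not_isUnit (isUnit_of_dvd_one h)
  · intro m hm
    rw [hdeg, Nat.cast_lt] at hm
    rw [coeff_add, coeff_X_pow, if_neg hm.ne, zero_add, coeff_C]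
    split_ifs
    · exact Ideal.mem_span_singleton.mpr hpc
    · exact zero_mem _
  · rw [hdeg]
    exact_mod_cast Nat.pos_of_ne_zero hn
  · rwa [coeff_add, coeff_X_pow, if_neg (Ne.symm hn), coeff_C_zero, zero_add,
      Ideal.span_singleton_pow, Ideal.mem_span_singleton]

end Polynomial

namespace MvPolynomial

section Shear

variable {σ R : Type*} [CommRing R] [DecidableEq σ]

noncomputable def shear (i j : σ) (hij : i ≠ j) : MvPolynomial σ R ≃ₐ[R] MvPolynomial σ R :=
  AlgEquiv.ofAlgHom (aeval (Function.update X i (X i + X j)))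
    (aeval (Function.update X i (X i - X j)))
    (algHom_ext fun k => by
      rcases eq_or_ne k i with rfl | hk
      · simp [Function.update_of_ne hij.symm]
      · simp [hk])
    (algHom_ext fun k => by
      rcases eq_or_ne k i with rfl | hk
      · simp [Function.update_of_ne hij.symm]
      · simp [hk])

theorem shear_X_sub_X (i j : σ) (hij : i ≠ j) : shear (R := R) i j hij (X i - X j) = X i := by
  simp [shear, Function.update_of_ne hij.symm]

end Shear

theorem prime_X_sub_X {σ R : Type*} [CommRing R] [IsDomain R] {i j : σ} (hij : i ≠ j) :
    Prime (X i - X j : MvPolynomial σ R) := by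
  classical
  rw [← MulEquiv.prime_iff (shear i j hij), shear_X_sub_X]
  exact X_prime

section CubeDifferences

variable {R : Type*} [CommRing R]

theorem prod_cube_sub_eq_X_sub_X_mul :
    ((X 0 ^ 3 - X 1 ^ 3) * (X 1 ^ 3 - X 2 ^ 3) * (X 2 ^ 3 - X 0 ^ 3) : MvPolynomial (Fin 3) R) =
      (X 0 - X 1) * ((X 0 ^ 2 + X 0 * X 1 + X 1 ^ 2) * (X 1 ^ 3 - X 2 ^ 3) * (X 2 ^ 3 - X 0 ^ 3)) := by
  ring

theorem X_sub_X_not_dvd_cofactor (h3 : (3 : R) ≠ 0) :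
    ¬(X 0 - X 1 : MvPolynomial (Fin 3) R) ∣
      (X 0 ^ 2 + X 0 * X 1 + X 1 ^ 2) * (X 1 ^ 3 - X 2 ^ 3) * (X 2 ^ 3 - X 0 ^ 3) := by
  rintro ⟨t, ht⟩
  -- at `(1, 1, 0)` the divisor vanishes and the cofactor equals `3 * 1 * (-1)`
  have := congrArg (eval ![1, 1, 0]) ht
  norm_num [Matrix.cons_val_two, Matrix.tail_cons, Matrix.head_cons] at this
  exact h3 this

theorem finSuccEquiv_X_pow_add_prod_cube_sub (n : ℕ) :
    finSuccEquiv R 3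
        (X 0 ^ n + (X 1 ^ 3 - X 2 ^ 3) * (X 2 ^ 3 - X 3 ^ 3) * (X 3 ^ 3 - X 1 ^ 3)) =
      Polynomial.X ^ n +
        Polynomial.C ((X 0 ^ 3 - X 1 ^ 3) * (X 1 ^ 3 - X 2 ^ 3) * (X 2 ^ 3 - X 0 ^ 3)) := by
  have h1 : finSuccEquiv R 3 (X 1) = Polynomial.C (X 0) := finSuccEquiv_X_succ (j := 0)
  have h2 : finSuccEquiv R 3 (X 2) = Polynomial.C (X 1) := finSuccEquiv_X_succ (j := 1)
  have h3 : finSuccEquiv R 3 (X 3) = Polynomial.C (X 2) := finSuccEquiv_X_succ (j := 2)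
  simp only [map_add, map_mul, map_sub, map_pow, finSuccEquiv_X_zero, h1, h2, h3]

theorem irreducible_X_pow_add_prod_cube_sub [IsDomain R] (h3 : (3 : R) ≠ 0) {n : ℕ}
    (hn : n ≠ 0) :
    Irreducible
      (X 0 ^ n + (X 1 ^ 3 - X 2 ^ 3) * (X 2 ^ 3 - X 3 ^ 3) * (X 3 ^ 3 - X 1 ^ 3) :
        MvPolynomial (Fin 4) R) := by
  have hp : Prime (X 0 - X 1 : MvPolynomial (Fin 3) R) := prime_X_sub_X (by decide)
  rw [← MulEquiv.irreducible_iff (finSuccEquiv R 3), finSuccEquiv_X_pow_add_prod_cube_sub]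
  refine Polynomial.irreducible_X_pow_add_C_of_prime_dvd hp
    (Dvd.intro _ prod_cube_sub_eq_X_sub_X_mul.symm) ?_ hn
  rw [prod_cube_sub_eq_X_sub_X_mul, pow_two, mul_dvd_mul_iff_left hp.ne_zero]
  exact X_sub_X_not_dvd_cofactor h3

end CubeDifferences

end MvPolynomial

theorem stmt_0 : Irreducible FS1 :=
  irreducible_X_pow_add_prod_cube_sub three_ne_zero (by norm_num)
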